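/- Let (H,R) be a quasitriangular Hopf algebra, A a quantum commutative Yetter–Drinfeld module algebra (ab = (a₍₋₁₎·b)a₍₀₎ for all a,b ∈ A), and Z a Yetter–Drinfeld module. If c⊗z ∈ A⊗Z satisfies the cotensor condition Σ R²·c₍₀₎ ⊗ R¹c₍₋₁₎ ⊗ z = Σ c ⊗ z₍₋₁₎S(R²) ⊗ R¹·z₍₀₎, then (1⊗ā)•(c⊗z) = ac ⊗ z for all a ∈ A, where • is the Aᵉ-action (a⊗b̄)•(c⊗z) = Σ a(R²·c)(r²S⁻¹(z₍₋₁₎)R¹·b) ⊗ r¹·z₍₀₎. -/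

import Mathlib

/-!
Put `φ_a(x ⊗ h) = ∑ (R²·x)((S⁻¹(h)R¹)·a)`. Since `S⁻¹` is an antihomomorphism,
`(1 ⊗ ā)•(c ⊗ z) = (φ_a ⊗ id)(c ⊗ χ⁻(z))`, and the cotensor condition turns this into
`(φ_a ⊗ id)(χ⁺(c) ⊗ z)`. It remains to see `φ_a ∘ χ⁺ = a·-`: the identity
`∑ S⁻¹(R¹)r¹ ⊗ r²R² = 1 ⊗ 1`, a consequence of (QT1) and (QT2), collapses `φ_a(χ⁺(c))` to
`∑ c₍₀₎(S⁻¹(c₍₋₁₎)·a)`; quantum commutativity and coassociativity rewrite this as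
`∑ (c₍₋₁₎₍₂₎S⁻¹(c₍₋₁₎₍₁₎)·a)c₍₀₎`, which is `ac` by the antipode and counit axioms.
-/

open TensorProduct

noncomputable section

/-- Scalar multiplication by a fixed `h : H` as a `k`-linear map. -/
def smulL (k : Type) {H M : Type} [CommRing k] [Ring H] [AddCommGroup M]
    [Module k M] [Module H M] [SMulCommClass H k M] (h : H) : M →ₗ[k] M where
  toFun m := h • m
  map_add' := smul_add h
  map_smul' c m := smul_comm h c m

/-- The module action `H ⊗ M → M` as a linear map. -/
def actT (k H M : Type) [CommRing k] [Ring H] [Algebra k H] [AddCommGroup M]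
    [Module k M] [Module H M] [IsScalarTower k H M] [SMulCommClass H k M] :
    H ⊗[k] M →ₗ[k] M :=
  TensorProduct.lift
    { toFun := fun h => smulL k h
      map_add' := fun h h' => LinearMap.ext fun m => add_smul h h' m
      map_smul' := fun c h => LinearMap.ext fun m => smul_assoc c h m }

/-- Quasitriangular structure, with the R-matrix given by a finite family
`R = ∑ i, R1 i ⊗ R2 i`, satisfying (QT1)-(QT4) and invertibility. -/
structure QT (k H : Type) [CommRing k] [Ring H] [HopfAlgebra k H]
    {ι : Type} [Fintype ι] (R1 R2 : ι → H) : Prop where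
  qt1a : ∑ i, Coalgebra.counit (R := k) (R1 i) • R2 i = (1 : H)
  qt1b : ∑ i, Coalgebra.counit (R := k) (R2 i) • R1 i = (1 : H)
  qt2 : ∑ i, Coalgebra.comul (R := k) (R1 i) ⊗ₜ[k] R2 i
      = ∑ i, ∑ j, (R1 i ⊗ₜ[k] R1 j) ⊗ₜ[k] (R2 i * R2 j)
  qt3 : ∑ i, R1 i ⊗ₜ[k] Coalgebra.comul (R := k) (R2 i)
      = ∑ i, ∑ j, (R1 i * R1 j) ⊗ₜ[k] (R2 j ⊗ₜ[k] R2 i)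
  qt4 : ∀ h : H, (∑ i, R1 i ⊗ₜ[k] R2 i) * Coalgebra.comul (R := k) h
      = TensorProduct.comm k H H (Coalgebra.comul (R := k) h) * (∑ i, R1 i ⊗ₜ[k] R2 i)
  isUnit : IsUnit (∑ i, R1 i ⊗ₜ[k] R2 i)

/-- The left adjoint action `h ⊗ x ↦ h₁ x S(h₂)` as a linear map. -/
def adjT (k H : Type) [CommRing k] [Ring H] [HopfAlgebra k H] : H ⊗[k] H →ₗ[k] H :=
  (LinearMap.mul' k H) ∘ₗ
    (LinearMap.lTensor H (LinearMap.mul' k H)) ∘ₗ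
    (LinearMap.lTensor H ((TensorProduct.map (LinearMap.id : H →ₗ[k] H)
        (HopfAlgebra.antipode (R := k))) ∘ₗ (TensorProduct.comm k H H).toLinearMap)) ∘ₗ
    (TensorProduct.assoc k H H H).toLinearMap ∘ₗ
    (LinearMap.rTensor H (Coalgebra.comul (R := k)))

/-- The diagonal action of `H` on `M ⊗ N`, `h ⊗ (m ⊗ n) ↦ h₁·m ⊗ h₂·n`. -/
def actD (k H M N : Type) [CommRing k] [Ring H] [HopfAlgebra k H]
    [AddCommGroup M] [Module k M] [Module H M] [IsScalarTower k H M] [SMulCommClass H k M]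
    [AddCommGroup N] [Module k N] [Module H N] [IsScalarTower k H N] [SMulCommClass H k N] :
    H ⊗[k] (M ⊗[k] N) →ₗ[k] M ⊗[k] N :=
  (TensorProduct.map (actT k H M) (actT k H N)) ∘ₗ
    (TensorProduct.tensorTensorTensorComm k H H M N).toLinearMap ∘ₗ
    (LinearMap.rTensor (M ⊗[k] N) (Coalgebra.comul (R := k)))

/-- Left-hand side of the Yetter-Drinfeld compatibility condition,
`h ⊗ m ↦ h₁ m₍₋₁₎ ⊗ h₂ · m₍₀₎`, relative to an action map `act` and coaction `lam`. -/
def ydLa (k H M : Type) [CommRing k] [Ring H] [HopfAlgebra k H] [AddCommGroup M] [Module k M]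
    (act : H ⊗[k] M →ₗ[k] M) (lam : M →ₗ[k] H ⊗[k] M) : H ⊗[k] M →ₗ[k] H ⊗[k] M :=
  (TensorProduct.map (LinearMap.mul' k H) act) ∘ₗ
    (TensorProduct.tensorTensorTensorComm k H H H M).toLinearMap ∘ₗ
    (TensorProduct.map (Coalgebra.comul (R := k)) lam)

/-- Right-hand side of the Yetter-Drinfeld compatibility condition,
`h ⊗ m ↦ (h₁·m)₍₋₁₎ h₂ ⊗ (h₁·m)₍₀₎`. -/
def ydRa (k H M : Type) [CommRing k] [Ring H] [HopfAlgebra k H] [AddCommGroup M] [Module k M]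
    (act : H ⊗[k] M →ₗ[k] M) (lam : M →ₗ[k] H ⊗[k] M) : H ⊗[k] M →ₗ[k] H ⊗[k] M :=
  (LinearMap.rTensor M ((LinearMap.mul' k H) ∘ₗ (TensorProduct.comm k H H).toLinearMap)) ∘ₗ
    (TensorProduct.assoc k H H M).symm.toLinearMap ∘ₗ
    (LinearMap.lTensor H (lam ∘ₗ act)) ∘ₗ
    (TensorProduct.assoc k H H M).toLinearMap ∘ₗ
    (LinearMap.rTensor M (TensorProduct.comm k H H).toLinearMap) ∘ₗ
    (LinearMap.rTensor M (Coalgebra.comul (R := k)))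


@[simp] lemma smulL_apply (k : Type) {H M : Type} [CommRing k] [Ring H] [AddCommGroup M]
    [Module k M] [Module H M] [SMulCommClass H k M] (h : H) (m : M) :
    (smulL k h : M →ₗ[k] M) m = h • m := rfl

@[simp] lemma actT_tmul (k H M : Type) [CommRing k] [Ring H] [Algebra k H] [AddCommGroup M]
    [Module k M] [Module H M] [IsScalarTower k H M] [SMulCommClass H k M] (h : H) (m : M) :
    actT k H M (h ⊗ₜ[k] m) = h • m := rfl

section InverseAntipode

open HopfAlgebra

variable {k H : Type} [CommRing k] [Ring H] [HopfAlgebra k H] {Sinv : H →ₗ[k] H}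

lemma antipode_Sinv_apply (hS1 : antipode k ∘ₗ Sinv = LinearMap.id) (x : H) :
    antipode k (Sinv x) = x :=
  LinearMap.congr_fun hS1 x

lemma Sinv_antipode_apply (hS2 : Sinv ∘ₗ antipode k = LinearMap.id) (x : H) :
    Sinv (antipode k x) = x :=
  LinearMap.congr_fun hS2 x

lemma Sinv_mul_antidistrib (hS1 : antipode k ∘ₗ Sinv = LinearMap.id)
    (hS2 : Sinv ∘ₗ antipode k = LinearMap.id) (x y : H) :
    Sinv (x * y) = Sinv y * Sinv x := by
  apply Function.LeftInverse.injective (Sinv_antipode_apply hS2)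
  rw [antipode_mul_antidistrib, antipode_Sinv_apply hS1, antipode_Sinv_apply hS1,
    antipode_Sinv_apply hS1]

lemma sum_Sinv_right_mul_left_eq_smul (hS1 : antipode k ∘ₗ Sinv = LinearMap.id)
    (hS2 : Sinv ∘ₗ antipode k = LinearMap.id) {h : H} {ι : Type*} (r : Coalgebra.Repr k h ι) :
    ∑ i ∈ r.index, Sinv (r.right i) * r.left i = Coalgebra.counit (R := k) h • (1 : H) := by
  apply Function.LeftInverse.injective (Sinv_antipode_apply hS2)
  simp only [map_sum, map_smul, antipode_mul_antidistrib, antipode_Sinv_apply hS1, antipode_one]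
  exact sum_antipode_mul_eq_smul r

lemma sum_right_mul_Sinv_left_eq_smul (hS1 : antipode k ∘ₗ Sinv = LinearMap.id)
    (hS2 : Sinv ∘ₗ antipode k = LinearMap.id) {h : H} {ι : Type*} (r : Coalgebra.Repr k h ι) :
    ∑ i ∈ r.index, r.right i * Sinv (r.left i) = Coalgebra.counit (R := k) h • (1 : H) := by
  apply Function.LeftInverse.injective (Sinv_antipode_apply hS2)
  simp only [map_sum, map_smul, antipode_mul_antidistrib, antipode_Sinv_apply hS1, antipode_one]
  exact sum_mul_antipode_eq_smul r

end InverseAntipode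

namespace QT

variable {k H : Type} [CommRing k] [Ring H] [HopfAlgebra k H] {ι : Type} [Fintype ι]
  {R1 R2 : ι → H}

lemma sum_Sinv_mul_tmul_mul (hqt : QT k H R1 R2) {Sinv : H →ₗ[k] H}
    (hS1 : HopfAlgebra.antipode k ∘ₗ Sinv = LinearMap.id)
    (hS2 : Sinv ∘ₗ HopfAlgebra.antipode k = LinearMap.id) :
    ∑ i, ∑ j, (Sinv (R1 i) * R1 j) ⊗ₜ[k] (R2 j * R2 i) = (1 : H) ⊗ₜ[k] (1 : H) := by
  -- apply `(x ⊗ y ↦ S⁻¹(y) x) ⊗ id` to (QT2) and collapse its left side with (QT1)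
  have key := congrArg (LinearMap.rTensor H (LinearMap.mul' k H ∘ₗ
    LinearMap.rTensor H Sinv ∘ₗ (TensorProduct.comm k H H).toLinearMap)) hqt.qt2
  have hcollapse : ∀ h : H, LinearMap.mul' k H (LinearMap.rTensor H Sinv
      (TensorProduct.comm k H H (Coalgebra.comul (R := k) h)))
      = Coalgebra.counit (R := k) h • (1 : H) := fun h => by
    rw [← (Coalgebra.Repr.arbitrary k h).eq]
    simp only [map_sum, TensorProduct.comm_tmul, LinearMap.rTensor_tmul, LinearMap.mul'_apply]
    exact sum_Sinv_right_mul_left_eq_smul hS1 hS2 _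
  simp only [map_sum, LinearMap.rTensor_tmul, LinearMap.coe_comp, Function.comp_apply,
    LinearEquiv.coe_coe, hcollapse, TensorProduct.comm_tmul, LinearMap.mul'_apply] at key
  simp_rw [TensorProduct.smul_tmul, ← TensorProduct.tmul_sum, hqt.qt1a] at key
  rw [Finset.sum_comm, ← key]

end QT

section BarAction

variable {k H A : Type} [CommRing k] [Ring H] [HopfAlgebra k H]
  [Ring A] [Algebra k A] [Module H A] [IsScalarTower k H A]

def mulSinvSmul (Sinv : H →ₗ[k] H) (a : A) : H ⊗[k] A →ₗ[k] A :=
  LinearMap.mul' k A ∘ₗ TensorProduct.map LinearMap.id (LinearMap.smulRight Sinv a) ∘ₗ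
    (TensorProduct.comm k H A).toLinearMap

@[simp] lemma mulSinvSmul_tmul (Sinv : H →ₗ[k] H) (a x : A) (h : H) :
    mulSinvSmul Sinv a (h ⊗ₜ[k] x) = x * (Sinv h • a) := rfl

variable [SMulCommClass H k A]

lemma mul_eq_coaction_smul_mul {lamA : A →ₗ[k] H ⊗[k] A}
    (hqc : (LinearMap.mul' k A)
        = (LinearMap.mul' k A) ∘ₗ (TensorProduct.comm k A A).toLinearMap ∘ₗ
          (LinearMap.lTensor A (actT k H A)) ∘ₗ
          (TensorProduct.assoc k A H A).toLinearMap ∘ₗ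
          (LinearMap.rTensor A (TensorProduct.comm k H A).toLinearMap) ∘ₗ
          (LinearMap.rTensor A lamA)) (x y : A) :
    x * y = LinearMap.mul' k A
      (TensorProduct.map (LinearMap.smulRight LinearMap.id y) LinearMap.id (lamA x)) := by
  have h := LinearMap.congr_fun hqc (x ⊗ₜ[k] y)
  simp only [LinearMap.mul'_apply, LinearMap.coe_comp, Function.comp_apply,
    LinearMap.rTensor_tmul] at h
  rw [h]
  induction lamA x using TensorProduct.induction_on with
  | zero => simp
  | add s t hs ht => simp only [TensorProduct.add_tmul, map_add, hs, ht]
  | tmul g z => simp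

lemma mulSinvSmul_coaction {Sinv : H →ₗ[k] H}
    (hS1 : HopfAlgebra.antipode k ∘ₗ Sinv = LinearMap.id)
    (hS2 : Sinv ∘ₗ HopfAlgebra.antipode k = LinearMap.id) {lamA : A →ₗ[k] H ⊗[k] A}
    (hAcounit : ∀ a : A, (TensorProduct.lid k A)
        ((LinearMap.rTensor A (Coalgebra.counit (R := k))) (lamA a)) = a)
    (hAcoassoc : (LinearMap.rTensor A (Coalgebra.comul (R := k))) ∘ₗ lamA
        = (TensorProduct.assoc k H H A).symm.toLinearMap ∘ₗ
          (LinearMap.lTensor H lamA) ∘ₗ lamA)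
    (hqc : (LinearMap.mul' k A)
        = (LinearMap.mul' k A) ∘ₗ (TensorProduct.comm k A A).toLinearMap ∘ₗ
          (LinearMap.lTensor A (actT k H A)) ∘ₗ
          (TensorProduct.assoc k A H A).toLinearMap ∘ₗ
          (LinearMap.rTensor A (TensorProduct.comm k H A).toLinearMap) ∘ₗ
          (LinearMap.rTensor A lamA)) (a c : A) :
    mulSinvSmul Sinv a (lamA c) = a * c := by
  set G : (H ⊗[k] H) ⊗[k] A →ₗ[k] A := LinearMap.mul' k A ∘ₗ TensorProduct.map
    (LinearMap.smulRight (LinearMap.mul' k H ∘ₗ (TensorProduct.comm k H H).toLinearMap ∘ₗ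
      LinearMap.rTensor H Sinv) a) LinearMap.id
  have hG : ∀ (h g : H) (x : A), G ((h ⊗ₜ[k] g) ⊗ₜ[k] x) = ((g * Sinv h) • a) * x :=
    fun _ _ _ => rfl
  have hcomm : ∀ t : H ⊗[k] A, mulSinvSmul Sinv a t
      = G ((TensorProduct.assoc k H H A).symm (LinearMap.lTensor H lamA t)) := by
    intro t
    induction t using TensorProduct.induction_on with
    | zero => simp
    | add s t hs ht => simp only [map_add, hs, ht]
    | tmul h x =>
      rw [mulSinvSmul_tmul, mul_eq_coaction_smul_mul hqc, LinearMap.lTensor_tmul]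
      induction lamA x using TensorProduct.induction_on with
      | zero => simp
      | add s t hs ht => simp only [map_add, TensorProduct.tmul_add, hs, ht]
      | tmul g y => simp [hG, mul_smul]
  have hcounit : ∀ t : H ⊗[k] A, G (LinearMap.rTensor A (Coalgebra.comul (R := k)) t)
      = a * TensorProduct.lid k A (LinearMap.rTensor A (Coalgebra.counit (R := k)) t) := by
    intro t
    induction t using TensorProduct.induction_on with
    | zero => simp
    | add s t hs ht => simp only [map_add, mul_add, hs, ht]
    | tmul h x =>
      rw [LinearMap.rTensor_tmul, ← (Coalgebra.Repr.arbitrary k h).eq, TensorProduct.sum_tmul,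
        map_sum]
      simp only [hG, ← Finset.sum_mul, ← Finset.sum_smul,
        sum_right_mul_Sinv_left_eq_smul hS1 hS2, LinearMap.rTensor_tmul,
        TensorProduct.lid_tmul, smul_assoc, one_smul, smul_mul_assoc, mul_smul_comm]
  calc mulSinvSmul Sinv a (lamA c)
      = G ((TensorProduct.assoc k H H A).symm (LinearMap.lTensor H lamA (lamA c))) := hcomm _
    _ = G (LinearMap.rTensor A (Coalgebra.comul (R := k)) (lamA c)) :=
        congrArg G (LinearMap.congr_fun hAcoassoc c).symm
    _ = a * c := by rw [hcounit, hAcounit]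

variable {ι : Type} [Fintype ι] (R1 R2 : ι → H)

def barAct (Sinv : H →ₗ[k] H) (a : A) : A ⊗[k] H →ₗ[k] A :=
  ∑ i, LinearMap.mul' k A ∘ₗ TensorProduct.map (smulL k (R2 i) : A →ₗ[k] A)
    (LinearMap.smulRight (LinearMap.mulRight k (R1 i) ∘ₗ Sinv) a)

@[simp] lemma barAct_tmul (Sinv : H →ₗ[k] H) (a x : A) (h : H) :
    barAct R1 R2 Sinv a (x ⊗ₜ[k] h) = ∑ i, (R2 i • x) * ((Sinv h * R1 i) • a) := by
  simp [barAct]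

lemma barAct_sum_tmul {Sinv : H →ₗ[k] H} (hqt : QT k H R1 R2)
    (hS1 : HopfAlgebra.antipode k ∘ₗ Sinv = LinearMap.id)
    (hS2 : Sinv ∘ₗ HopfAlgebra.antipode k = LinearMap.id) (a x : A) (h : H) :
    barAct R1 R2 Sinv a (∑ i, (R2 i • x) ⊗ₜ[k] (R1 i * h)) = x * (Sinv h • a) := by
  -- evaluate `u ⊗ v ↦ (v·x)((S⁻¹(h)u)·a)` on `∑ S⁻¹(R¹)r¹ ⊗ r²R² = 1 ⊗ 1`
  have key := congrArg (LinearMap.mul' k A ∘ₗ TensorProduct.map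
    (LinearMap.smulRight LinearMap.id x) (LinearMap.smulRight (LinearMap.mulLeft k (Sinv h)) a)
    ∘ₗ (TensorProduct.comm k H H).toLinearMap) (hqt.sum_Sinv_mul_tmul_mul hS1 hS2)
  simp only [map_sum, LinearMap.coe_comp, Function.comp_apply, LinearEquiv.coe_coe,
    TensorProduct.comm_tmul, TensorProduct.map_tmul, LinearMap.smulRight_apply,
    LinearMap.mulLeft_apply, LinearMap.id_apply, LinearMap.mul'_apply, mul_one, one_smul] at key
  simp only [map_sum, barAct_tmul, Sinv_mul_antidistrib hS1 hS2, ← mul_assoc, mul_smul] at key ⊢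
  rw [← key, Finset.sum_comm]

end BarAction

section AeAction

variable (k H A Z : Type) [Field k] [Ring H] [HopfAlgebra k H]
variable [Ring A] [Algebra k A] [Module H A] [IsScalarTower k H A] [SMulCommClass H k A]
variable [AddCommGroup Z] [Module k Z] [Module H Z] [IsScalarTower k H Z] [SMulCommClass H k Z]
variable {ι : Type} [Fintype ι] (R1 R2 : ι → H)

/-- The multiplication of the braided enveloping algebra `Aᵉ = A ⊗ Ā`:
`(a⊗b̄)(c⊗d̄) = ∑ a(R²·c) ⊗ (r²·d)(r¹R¹·b)`. -/
def mAe : (A ⊗[k] A) ⊗[k] (A ⊗[k] A) →ₗ[k] A ⊗[k] A :=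
  ∑ i, ∑ j,
    (TensorProduct.map
      ((LinearMap.mul' k A) ∘ₗ (LinearMap.lTensor A (smulL k (R2 i) : A →ₗ[k] A)))
      ((LinearMap.mul' k A) ∘ₗ
        (TensorProduct.map (smulL k (R2 j) : A →ₗ[k] A)
          (smulL k (R1 j * R1 i) : A →ₗ[k] A)) ∘ₗ
        (TensorProduct.comm k A A).toLinearMap)) ∘ₗ
    (TensorProduct.tensorTensorTensorComm k A A A A).toLinearMap

/-- The `Aᵉ`-action on `A ⊗ Z`:
`(a⊗b̄)•(c⊗z) = ∑ a(R²·c)(r²S⁻¹(z₍₋₁₎)R¹·b) ⊗ r¹·z₍₀₎`. -/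
def aeAct (Sinv : H →ₗ[k] H) (lamZ : Z →ₗ[k] H ⊗[k] Z) :
    (A ⊗[k] A) ⊗[k] (A ⊗[k] Z) →ₗ[k] A ⊗[k] Z :=
  ∑ i, ∑ j,
    (LinearMap.rTensor Z (LinearMap.mul' k A)) ∘ₗ
    (TensorProduct.assoc k A A Z).symm.toLinearMap ∘ₗ
    (TensorProduct.map
      ((LinearMap.mul' k A) ∘ₗ (LinearMap.lTensor A (smulL k (R2 i) : A →ₗ[k] A)))
      ((TensorProduct.map
          ((actT k H A) ∘ₗ (LinearMap.rTensor A
            ((LinearMap.mulLeft k (R2 j)) ∘ₗ (LinearMap.mulRight k (R1 i)) ∘ₗ Sinv)))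
          (smulL k (R1 j) : Z →ₗ[k] Z)) ∘ₗ
        (LinearMap.rTensor Z (TensorProduct.comm k A H).toLinearMap) ∘ₗ
        (TensorProduct.assoc k A H Z).symm.toLinearMap)) ∘ₗ
    (TensorProduct.tensorTensorTensorComm k A A A (H ⊗[k] Z)).toLinearMap ∘ₗ
    (LinearMap.lTensor (A ⊗[k] A) (LinearMap.lTensor A lamZ))

/-- `χ⁺(a) = ∑ R²·a₍₀₎ ⊗ R¹a₍₋₁₎` on `A`. -/
def chiPlusA (lamA : A →ₗ[k] H ⊗[k] A) : A →ₗ[k] A ⊗[k] H :=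
  ∑ i, (TensorProduct.map (smulL k (R2 i) : A →ₗ[k] A) (LinearMap.mulLeft k (R1 i))) ∘ₗ
    (TensorProduct.comm k H A).toLinearMap ∘ₗ lamA

/-- `χ⁻(z) = ∑ z₍₋₁₎S(R²) ⊗ R¹·z₍₀₎` on `Z`. -/
def chiMinusZ (lamZ : Z →ₗ[k] H ⊗[k] Z) : Z →ₗ[k] H ⊗[k] Z :=
  ∑ i, (TensorProduct.map (LinearMap.mulRight k (HopfAlgebra.antipode (R := k) (R2 i)))
    (smulL k (R1 i) : Z →ₗ[k] Z)) ∘ₗ lamZ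


section Invariance

variable {k H A}

lemma aeAct_one_tmul_eq_barAct {M : Type} [AddCommGroup M] [Module k M] [Module H M]
    [SMulCommClass H k M] {Sinv : H →ₗ[k] H}
    (hS1 : HopfAlgebra.antipode k ∘ₗ Sinv = LinearMap.id)
    (hS2 : Sinv ∘ₗ HopfAlgebra.antipode k = LinearMap.id)
    (lam : M →ₗ[k] H ⊗[k] M) (a : A) (u : A ⊗[k] M) :
    aeAct k H A M R1 R2 Sinv lam (((1 : A) ⊗ₜ[k] a) ⊗ₜ[k] u)
      = LinearMap.rTensor M (barAct R1 R2 Sinv a) ((TensorProduct.assoc k A H M).symm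
          (LinearMap.lTensor A (chiMinusZ k H M R1 R2 lam) u)) := by
  induction u using TensorProduct.induction_on with
  | zero => simp
  | add u v hu hv => rw [TensorProduct.tmul_add, map_add, hu, hv, map_add, map_add, map_add]
  | tmul c m =>
    simp only [aeAct, chiMinusZ, LinearMap.sum_apply, LinearMap.comp_apply,
      LinearMap.lTensor_tmul]
    induction lam m using TensorProduct.induction_on with
    | zero => simp
    | add s t hs ht => simp only [TensorProduct.tmul_add, map_add, Finset.sum_add_distrib, hs, ht]
    | tmul g n =>
      simp only [LinearEquiv.coe_coe, TensorProduct.tensorTensorTensorComm_tmul,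
        TensorProduct.map_tmul, LinearMap.coe_comp, Function.comp_apply, LinearMap.lTensor_tmul,
        smulL_apply, LinearMap.mul'_apply, one_mul, TensorProduct.assoc_symm_tmul,
        LinearMap.rTensor_tmul, TensorProduct.comm_tmul, LinearMap.mulRight_apply,
        LinearMap.mulLeft_apply, actT_tmul, TensorProduct.tmul_sum, map_sum, barAct_tmul,
        Sinv_mul_antidistrib hS1 hS2, Sinv_antipode_apply hS2, mul_assoc, TensorProduct.sum_tmul]
      exact Finset.sum_comm

lemma barAct_chiPlusA {Sinv : H →ₗ[k] H} (hqt : QT k H R1 R2)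
    (hS1 : HopfAlgebra.antipode k ∘ₗ Sinv = LinearMap.id)
    (hS2 : Sinv ∘ₗ HopfAlgebra.antipode k = LinearMap.id) (lamA : A →ₗ[k] H ⊗[k] A) (a c : A) :
    barAct R1 R2 Sinv a (chiPlusA k H A R1 R2 lamA c) = mulSinvSmul Sinv a (lamA c) := by
  simp only [chiPlusA, LinearMap.sum_apply, LinearMap.comp_apply]
  induction lamA c using TensorProduct.induction_on with
  | zero => simp
  | add s t hs ht => simp only [map_add, Finset.sum_add_distrib, hs, ht]
  | tmul h x =>
    simp only [LinearEquiv.coe_coe, TensorProduct.comm_tmul, TensorProduct.map_tmul, smulL_apply,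
      LinearMap.mulLeft_apply, barAct_sum_tmul R1 R2 hqt hS1 hS2, mulSinvSmul_tmul]

end Invariance

theorem cotensor_invariant (hqt : QT k H R1 R2)
    (Sinv : H →ₗ[k] H)
    (hS1 : (HopfAlgebra.antipode (R := k) (A := H)) ∘ₗ Sinv = LinearMap.id)
    (hS2 : Sinv ∘ₗ (HopfAlgebra.antipode (R := k) (A := H)) = LinearMap.id)
    -- A is a Yetter–Drinfeld module algebra with coaction lamA
    (lamA : A →ₗ[k] H ⊗[k] A)
    (hAcounit : ∀ a : A, (TensorProduct.lid k A)
        ((LinearMap.rTensor A (Coalgebra.counit (R := k))) (lamA a)) = a)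
    (hAcoassoc : (LinearMap.rTensor A (Coalgebra.comul (R := k))) ∘ₗ lamA
        = (TensorProduct.assoc k H H A).symm.toLinearMap ∘ₗ
          (LinearMap.lTensor H lamA) ∘ₗ lamA)
    -- A is quantum commutative: a b = ∑ (a₍₋₁₎·b) a₍₀₎
    (hqc : (LinearMap.mul' k A)
        = (LinearMap.mul' k A) ∘ₗ (TensorProduct.comm k A A).toLinearMap ∘ₗ
          (LinearMap.lTensor A (actT k H A)) ∘ₗ
          (TensorProduct.assoc k A H A).toLinearMap ∘ₗ
          (LinearMap.rTensor A (TensorProduct.comm k H A).toLinearMap) ∘ₗ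
          (LinearMap.rTensor A lamA))
    -- Z is a Yetter–Drinfeld module
    (lamZ : Z →ₗ[k] H ⊗[k] Z)
    -- w satisfies the cotensor condition
    (w : A ⊗[k] Z)
    (hw : (TensorProduct.assoc k A H Z)
          ((LinearMap.rTensor Z (chiPlusA k H A R1 R2 lamA)) w)
        = (LinearMap.lTensor A (chiMinusZ k H Z R1 R2 lamZ)) w) :
    ∀ a : A, aeAct k H A Z R1 R2 Sinv lamZ (((1 : A) ⊗ₜ[k] a) ⊗ₜ[k] w)
      = (LinearMap.rTensor Z (LinearMap.mulLeft k a)) w := by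
  intro a
  have hchi : barAct R1 R2 Sinv a ∘ₗ chiPlusA k H A R1 R2 lamA = LinearMap.mulLeft k a :=
    LinearMap.ext fun c => by
      rw [LinearMap.comp_apply, barAct_chiPlusA R1 R2 hqt hS1 hS2,
        mulSinvSmul_coaction hS1 hS2 hAcounit hAcoassoc hqc, LinearMap.mulLeft_apply]
  rw [aeAct_one_tmul_eq_barAct R1 R2 hS1 hS2, ← hw, LinearEquiv.symm_apply_apply,
    ← LinearMap.rTensor_comp_apply, hchi]

end AeAction

end
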